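/- Let F, G preserve colimits of λ-chains and let (φ, ψ) be a λ-ary G-identity, φ, ψ : G → F_λ. Let D be the diagram in the category of monads on C given by the two monad morphisms φ_λ, ψ_λ : M(G) ⇉ M(F) (the unique monad morphisms extending φ and ψ). Then the category Alg(F, (φ, ψ)) of F-algebras satisfying (φ, ψ) is concretely isomorphic over C to the category D-alg of algebras for the diagram D of monads (i.e., Eilenberg–Moore M(F)-algebras β : F_λ A → A for which β ∘ (φ_λ)_A = β ∘ (ψ_λ)_A). -/

import Mathlib

open CategoryTheory CategoryTheory.Limits

universe v u

/-- The free-algebra (term functor) construction for an endofunctor `F` on a cocomplete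
category: term functors `Fo n` for each ordinal `n`, connecting natural transformations
`w`, coproduct injections `q n : F ∘ Fₙ ⟶ F_{n+1}` and `ι n : Id ⟶ Fₙ`, where
`F₀ = Id` (up to iso, witnessed by `ι 0` being invertible), `F_{n+1} = F Fₙ + Id`
(witnessed by the binary-coproduct universal property), and `Fₗ = colim_{m<l} F_m` at
limit ordinals (witnessed by the hand-rolled colimit universal property). -/
structure TermConstruction {C : Type u} [Category.{v} C] (F : C ⥤ C) where
  Fo : Ordinal.{v} → C ⥤ C
  w : ∀ {m n : Ordinal.{v}}, m ≤ n → (Fo m ⟶ Fo n)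
  q : ∀ n : Ordinal.{v}, Fo n ⋙ F ⟶ Fo (n + 1)
  ι : ∀ n : Ordinal.{v}, 𝟭 C ⟶ Fo n
  iso0 : IsIso (ι 0)
  w_refl : ∀ n : Ordinal.{v}, w (le_refl n) = 𝟙 (Fo n)
  w_trans : ∀ {m n p : Ordinal.{v}} (h₁ : m ≤ n) (h₂ : n ≤ p), w h₁ ≫ w h₂ = w (h₁.trans h₂)
  ι_w : ∀ {m n : Ordinal.{v}} (h : m ≤ n), ι m ≫ w h = ι n
  q_w : ∀ {m n : Ordinal.{v}} (h : m ≤ n),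
      Functor.whiskerRight (w h) F ≫ q n = q m ≫ w (add_le_add_left h 1)
  succ_isColimit : ∀ (n : Ordinal.{v}) (A : C),
      Nonempty (IsColimit (BinaryCofan.mk ((q n).app A) ((ι (n + 1)).app A)))
  limit_exists_unique : ∀ (n : Ordinal.{v}), Order.IsSuccLimit n → ∀ (A X : C)
      (g : ∀ m : Ordinal.{v}, m < n → ((Fo m).obj A ⟶ X)),
      (∀ (m m' : Ordinal.{v}) (h : m ≤ m') (h' : m' < n),
        (w h).app A ≫ g m' h' = g m (lt_of_le_of_lt h h')) →
      ∃! k : (Fo n).obj A ⟶ X,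
        ∀ (m : Ordinal.{v}) (h : m < n), (w h.le).app A ≫ k = g m h

/-- The term-evaluations `ε n : Fₙ A ⟶ A` of an `F`-algebra `(A, α)`, defined recursively by
`ε 0 = id` (transported along `ι 0`), `ε (n+1) = [α ∘ F (ε n), id]` and colimits at limit
ordinals. -/
structure TermEval {C : Type u} [Category.{v} C] (F : C ⥤ C) (T : TermConstruction F)
    (A : C) (α : F.obj A ⟶ A) where
  ε : ∀ n : Ordinal.{v}, (T.Fo n).obj A ⟶ A
  ε_zero : (T.ι 0).app A ≫ ε 0 = 𝟙 A
  ε_succ_q : ∀ n : Ordinal.{v}, (T.q n).app A ≫ ε (n + 1) = F.map (ε n) ≫ α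
  ε_succ_ι : ∀ n : Ordinal.{v}, (T.ι (n + 1)).app A ≫ ε (n + 1) = 𝟙 A
  ε_limit : ∀ (n : Ordinal.{v}), Order.IsSuccLimit n →
      ∀ (m : Ordinal.{v}) (h : m < n), (T.w h.le).app A ≫ ε n = ε m

/-- The chain construction extending a natural transformation `ρ : G ⟶ F_λ` to
transformations `ρ_k : G_k ⟶ F_λ` on the term functors of `G`:  `ρ₁ = [ρ, η]`,
`ρ_{k+1} = [μ ∘ ρ F_λ ∘ G ρ_k, η]` (where `η = ι_λ` is the unit and `μ` the multiplication of
the free monad on `F`), with colimits at limit ordinals. -/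
structure ChainExtension {C : Type u} [Category.{v} C] (F G : C ⥤ C)
    (TF : TermConstruction F) (TG : TermConstruction G) (l : Ordinal.{v})
    (μ : TF.Fo l ⋙ TF.Fo l ⟶ TF.Fo l) (ρ : G ⟶ TF.Fo l) where
  ρo : ∀ k : Ordinal.{v}, TG.Fo k ⟶ TF.Fo l
  ρo_ι : ∀ k : Ordinal.{v}, TG.ι k ≫ ρo k = TF.ι l
  ρo_one : ∀ A : C,
      G.map ((TG.ι 0).app A) ≫ (TG.q 0).app A ≫ (ρo (0 + 1)).app A = ρ.app A
  ρo_succ : ∀ (k : Ordinal.{v}) (A : C),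
      (TG.q k).app A ≫ (ρo (k + 1)).app A =
        G.map ((ρo k).app A) ≫ ρ.app ((TF.Fo l).obj A) ≫ μ.app A
  ρo_limit : ∀ (k : Ordinal.{v}), Order.IsSuccLimit k → ∀ (j : Ordinal.{v}) (h : j < k),
      TG.w h.le ≫ ρo k = ρo j

/-!
An `F`-algebra `(A, α)` yields the `F_λ`-algebra `ε_λ : F_λ A ⟶ A`, and an `F_λ`-algebra `β`
yields the `F`-algebra `F A ⟶ F F_λ A ⟶ F_λ A ⟶ A` (unit, free structure `υ`, then `β`); both
constructions keep the carrier and the underlying morphisms. Because `F` preserves the colimit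
`F_λ = colim_{n<λ} F_n`, `ε_λ` is an `F`-algebra morphism out of the free algebra `F_λ A`;
this gives the Eilenberg–Moore laws of `ε_λ` and recovers `α`. Conversely, for an
Eilenberg–Moore algebra `β` a transfinite induction identifies the evaluations `ε_n` of the
associated `F`-algebra with `F_n A ⟶ F_λ A ⟶ A`, so `ε_λ = β`. Finally, along the chain `G_k`
the identity `(φ, ψ)` propagates to the extensions `φ_k, ψ_k`, while `φ` and `ψ` are recovered
from `φ_λ, ψ_λ` at stage `1`.
-/

namespace CategoryTheory

lemma Functor.ext_of_comp_faithful {D E B : Type*} [Category D] [Category E] [Category B]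
    {K L : D ⥤ E} (U : E ⥤ B) [U.Faithful] (hobj : ∀ X, K.obj X = L.obj X)
    (hU : K ⋙ U = L ⋙ U) : K = L :=
  Functor.ext hobj fun _ _ f => U.map_injective <| by
    simpa [eqToHom_map] using Functor.congr_hom hU f

namespace Endofunctor.Algebra

variable {C : Type u} [Category.{v} C] {F H : C ⥤ C}

def restructure (t : ∀ {A : C}, (F.obj A ⟶ A) → (H.obj A ⟶ A))
    (ht : ∀ {A B : C} {α : F.obj A ⟶ A} {β : F.obj B ⟶ B} (f : A ⟶ B),
      F.map f ≫ β = α ≫ f → H.map f ≫ t β = t α ≫ f) :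
    Algebra F ⥤ Algebra H where
  obj X := ⟨X.a, t X.str⟩
  map f := ⟨f.f, ht f.f f.h⟩

end Endofunctor.Algebra

end CategoryTheory

namespace TermConstruction

variable {C : Type u} [Category.{v} C] {F : C ⥤ C} (T : TermConstruction F)

lemma hom_ext_zero (A : C) {X : C} {k₁ k₂ : (T.Fo 0).obj A ⟶ X}
    (h : (T.ι 0).app A ≫ k₁ = (T.ι 0).app A ≫ k₂) : k₁ = k₂ := by
  have := T.iso0
  exact (cancel_epi _).1 h

lemma hom_ext_succ (n : Ordinal.{v}) (A : C) {X : C} {k₁ k₂ : (T.Fo (n + 1)).obj A ⟶ X}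
    (hq : (T.q n).app A ≫ k₁ = (T.q n).app A ≫ k₂)
    (hι : (T.ι (n + 1)).app A ≫ k₁ = (T.ι (n + 1)).app A ≫ k₂) : k₁ = k₂ :=
  BinaryCofan.IsColimit.hom_ext (T.succ_isColimit n A).some hq hι

lemma hom_ext_limit {n : Ordinal.{v}} (hn : Order.IsSuccLimit n) (A : C) {X : C}
    {k₁ k₂ : (T.Fo n).obj A ⟶ X}
    (h : ∀ (m : Ordinal.{v}) (hm : m < n), (T.w hm.le).app A ≫ k₁ = (T.w hm.le).app A ≫ k₂) :
    k₁ = k₂ := by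
  obtain ⟨k, -, huniq⟩ := T.limit_exists_unique n hn A X (fun m hm => (T.w hm.le).app A ≫ k₁)
    fun m m' hmm' hm' => by rw [← Category.assoc, ← NatTrans.comp_app, T.w_trans]
  exact (huniq k₁ fun _ _ => rfl).trans (huniq k₂ fun m hm => (h m hm).symm).symm

def chain (l : Ordinal.{v}) (A : C) : {m : Ordinal.{v} // m < l} ⥤ C where
  obj m := (T.Fo m.1).obj A
  map f := (T.w (leOfHom f)).app A
  map_id m := by rw [T.w_refl]; rfl
  map_comp f g := by rw [← NatTrans.comp_app, T.w_trans]

def chainCocone (l : Ordinal.{v}) (A : C) : Cocone (T.chain l A) where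
  pt := (T.Fo l).obj A
  ι :=
    { app m := (T.w m.2.le).app A
      naturality m m' f := by
        show (T.w _).app A ≫ (T.w _).app A = (T.w _).app A ≫ 𝟙 _
        rw [Category.comp_id, ← NatTrans.comp_app, T.w_trans] }

noncomputable def isColimitChainCocone {l : Ordinal.{v}} (hl : Order.IsSuccLimit l) (A : C) :
    IsColimit (T.chainCocone l A) :=
  IsColimit.ofExistsUnique fun s => by
    obtain ⟨k, hk, huniq⟩ := T.limit_exists_unique l hl A s.pt (fun m hm => s.ι.app ⟨m, hm⟩)
      fun m m' hmm' hm' =>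
        s.w (homOfLE (show (⟨m, hmm'.trans_lt hm'⟩ : {m // m < l}) ≤ ⟨m', hm'⟩ from hmm'))
    exact ⟨k, fun j => hk j.1 j.2, fun k' hk' => huniq k' fun m hm => hk' ⟨m, hm⟩⟩

lemma hom_ext_map {l : Ordinal.{v}} (hl : Order.IsSuccLimit l) {D : Type*} [Category D]
    (H : C ⥤ D) [PreservesColimitsOfShape {m : Ordinal.{v} // m < l} H] (A : C) {X : D}
    {k₁ k₂ : H.obj ((T.Fo l).obj A) ⟶ X}
    (h : ∀ (m : Ordinal.{v}) (hm : m < l),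
      H.map ((T.w hm.le).app A) ≫ k₁ = H.map ((T.w hm.le).app A) ≫ k₂) : k₁ = k₂ :=
  (isColimitOfPreserves H (T.isColimitChainCocone hl A)).hom_ext fun m => h m.1 m.2

def IsFreeAlgebraStr (l : Ordinal.{v}) (υ : T.Fo l ⋙ F ⟶ T.Fo l) : Prop :=
  ∀ (n : Ordinal.{v}) (hn : n < l) (hn1 : n + 1 ≤ l) (A : C),
    F.map ((T.w hn.le).app A) ≫ υ.app A = (T.q n).app A ≫ (T.w hn1).app A

end TermConstruction

namespace TermEval

variable {C : Type u} [Category.{v} C] {F : C ⥤ C} {T : TermConstruction F} {l : Ordinal.{v}}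

lemma ι_comp_ε (hl : Order.IsSuccLimit l) {A : C} {α : F.obj A ⟶ A} (E : TermEval F T A α) :
    (T.ι l).app A ≫ E.ε l = 𝟙 A := by
  rw [← T.ι_w hl.pos.le, NatTrans.comp_app, Category.assoc, E.ε_limit l hl 0 hl.pos, E.ε_zero]

lemma υ_comp_ε (hl : Order.IsSuccLimit l) [PreservesColimitsOfShape {m : Ordinal.{v} // m < l} F]
    {υ : T.Fo l ⋙ F ⟶ T.Fo l} (hυ : T.IsFreeAlgebraStr l υ)
    {A : C} {α : F.obj A ⟶ A} (E : TermEval F T A α) :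
    υ.app A ≫ E.ε l = F.map (E.ε l) ≫ α := by
  refine T.hom_ext_map hl F A fun n hn => ?_
  have hn1 : n + 1 < l := hl.add_one_lt hn
  rw [← Category.assoc, hυ n hn hn1.le, Category.assoc, E.ε_limit l hl _ hn1, E.ε_succ_q,
    ← Category.assoc, ← F.map_comp, E.ε_limit l hl n hn]

lemma ε_naturality {A B : C} {α : F.obj A ⟶ A} {β : F.obj B ⟶ B}
    (EA : TermEval F T A α) (EB : TermEval F T B β)
    (f : A ⟶ B) (hf : F.map f ≫ β = α ≫ f) (n : Ordinal.{v}) :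
    EA.ε n ≫ f = (T.Fo n).map f ≫ EB.ε n := by
  induction n using Ordinal.limitRecOn with
  | zero =>
    refine T.hom_ext_zero A ?_
    rw [← Category.assoc, EA.ε_zero, ← (T.ι 0).naturality_assoc, EB.ε_zero]
    simp
  | add_one n ih =>
    refine T.hom_ext_succ n A ?_ ?_
    · rw [← Category.assoc, EA.ε_succ_q, Category.assoc, ← hf, ← Category.assoc, ← F.map_comp,
        ih, F.map_comp, Category.assoc, ← EB.ε_succ_q]
      exact (T.q n).naturality_assoc f _
    · rw [← Category.assoc, EA.ε_succ_ι, ← (T.ι (n + 1)).naturality_assoc, EB.ε_succ_ι]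
      simp
  | limit n hn ih =>
    refine T.hom_ext_limit hn A fun m hm => ?_
    rw [← Category.assoc, EA.ε_limit n hn m hm, ih m hm, ← (T.w hm.le).naturality_assoc,
      EB.ε_limit n hn m hm]

lemma ε_comp_ε (hl : Order.IsSuccLimit l) [PreservesColimitsOfShape {m : Ordinal.{v} // m < l} F]
    {υ : T.Fo l ⋙ F ⟶ T.Fo l} (hυ : T.IsFreeAlgebraStr l υ) {A : C}
    (E' : TermEval F T ((T.Fo l).obj A) (υ.app A)) {α : F.obj A ⟶ A} (E : TermEval F T A α) :
    E'.ε l ≫ E.ε l = (T.Fo l).map (E.ε l) ≫ E.ε l :=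
  ε_naturality E' E (E.ε l) (υ_comp_ε hl hυ E).symm l

lemma map_ι_comp_υ_comp_ε (hl : Order.IsSuccLimit l)
    [PreservesColimitsOfShape {m : Ordinal.{v} // m < l} F]
    {υ : T.Fo l ⋙ F ⟶ T.Fo l} (hυ : T.IsFreeAlgebraStr l υ)
    {A : C} {α : F.obj A ⟶ A} (E : TermEval F T A α) :
    F.map ((T.ι l).app A) ≫ υ.app A ≫ E.ε l = α := by
  rw [υ_comp_ε hl hυ E, ← Category.assoc, ← F.map_comp, ι_comp_ε hl E]
  simp

lemma υ_comp_eq_of_assoc (hl : Order.IsSuccLimit l)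
    [PreservesColimitsOfShape {m : Ordinal.{v} // m < l} F]
    {υ : T.Fo l ⋙ F ⟶ T.Fo l} (hυ : T.IsFreeAlgebraStr l υ) {A : C}
    (E' : TermEval F T ((T.Fo l).obj A) (υ.app A)) {β : (T.Fo l).obj A ⟶ A}
    (hassoc : E'.ε l ≫ β = (T.Fo l).map β ≫ β) :
    υ.app A ≫ β = F.map β ≫ F.map ((T.ι l).app A) ≫ υ.app A ≫ β := by
  conv_lhs => rw [← map_ι_comp_υ_comp_ε hl hυ E']
  rw [Category.assoc, Category.assoc, hassoc, ← υ.naturality_assoc, Functor.comp_map,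
    ← F.map_comp_assoc, ← (T.ι l).naturality, Functor.id_map, F.map_comp_assoc]

lemma ε_eq_w_comp_of_unit_of_assoc (hl : Order.IsSuccLimit l)
    [PreservesColimitsOfShape {m : Ordinal.{v} // m < l} F]
    {υ : T.Fo l ⋙ F ⟶ T.Fo l} (hυ : T.IsFreeAlgebraStr l υ) {A : C}
    (E' : TermEval F T ((T.Fo l).obj A) (υ.app A)) {β : (T.Fo l).obj A ⟶ A}
    (hunit : (T.ι l).app A ≫ β = 𝟙 A) (hassoc : E'.ε l ≫ β = (T.Fo l).map β ≫ β)
    (E : TermEval F T A (F.map ((T.ι l).app A) ≫ υ.app A ≫ β)) (n : Ordinal.{v})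
    (hn : n ≤ l) : E.ε n = (T.w hn).app A ≫ β := by
  induction n using Ordinal.limitRecOn with
  | zero =>
    refine T.hom_ext_zero A ?_
    rw [E.ε_zero, ← Category.assoc, ← NatTrans.comp_app, T.ι_w, hunit]
  | add_one n ih =>
    have hn' : n < l := (Order.lt_add_one_iff.2 le_rfl).trans_le hn
    refine T.hom_ext_succ n A ?_ ?_
    · rw [E.ε_succ_q, ih hn'.le, F.map_comp_assoc, ← υ_comp_eq_of_assoc hl hυ E' hassoc,
        ← Category.assoc, hυ n hn' hn, Category.assoc]
    · rw [E.ε_succ_ι, ← Category.assoc, ← NatTrans.comp_app, T.ι_w, hunit]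
  | limit n hlim ih =>
    refine T.hom_ext_limit hlim A fun m hm => ?_
    rw [E.ε_limit n hlim m hm, ih m hm (hm.le.trans hn), ← Category.assoc, ← NatTrans.comp_app,
      T.w_trans]

lemma ε_eq_of_unit_of_assoc (hl : Order.IsSuccLimit l)
    [PreservesColimitsOfShape {m : Ordinal.{v} // m < l} F]
    {υ : T.Fo l ⋙ F ⟶ T.Fo l} (hυ : T.IsFreeAlgebraStr l υ) {A : C}
    (E' : TermEval F T ((T.Fo l).obj A) (υ.app A)) {β : (T.Fo l).obj A ⟶ A}
    (hunit : (T.ι l).app A ≫ β = 𝟙 A) (hassoc : E'.ε l ≫ β = (T.Fo l).map β ≫ β)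
    (E : TermEval F T A (F.map ((T.ι l).app A) ≫ υ.app A ≫ β)) : E.ε l = β := by
  rw [ε_eq_w_comp_of_unit_of_assoc hl hυ E' hunit hassoc E l le_rfl, T.w_refl]
  exact Category.id_comp β

end TermEval

namespace ChainExtension

variable {C : Type u} [Category.{v} C] {F G : C ⥤ C} {TF : TermConstruction F}
  {TG : TermConstruction G} {l : Ordinal.{v}} {μ : TF.Fo l ⋙ TF.Fo l ⟶ TF.Fo l}

lemma q_comp_ρo_succ_comp {ρ : G ⟶ TF.Fo l} (Ξ : ChainExtension F G TF TG l μ ρ) {A : C}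
    {β : (TF.Fo l).obj A ⟶ A} (hassoc : μ.app A ≫ β = (TF.Fo l).map β ≫ β) (k : Ordinal.{v}) :
    (TG.q k).app A ≫ (Ξ.ρo (k + 1)).app A ≫ β = G.map ((Ξ.ρo k).app A ≫ β) ≫ ρ.app A ≫ β := by
  rw [← Category.assoc, Ξ.ρo_succ, Category.assoc, Category.assoc, hassoc,
    ← ρ.naturality_assoc, G.map_comp_assoc]

lemma ρo_comp_eq_of_app_comp_eq {φ ψ : G ⟶ TF.Fo l}
    (Φ : ChainExtension F G TF TG l μ φ) (Ψ : ChainExtension F G TF TG l μ ψ) {A : C}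
    {β : (TF.Fo l).obj A ⟶ A} (hassoc : μ.app A ≫ β = (TF.Fo l).map β ≫ β)
    (h : φ.app A ≫ β = ψ.app A ≫ β) (k : Ordinal.{v}) :
    (Φ.ρo k).app A ≫ β = (Ψ.ρo k).app A ≫ β := by
  have hι (k : Ordinal.{v}) : (TG.ι k).app A ≫ (Φ.ρo k).app A ≫ β =
      (TG.ι k).app A ≫ (Ψ.ρo k).app A ≫ β := by
    rw [← Category.assoc, ← Category.assoc, ← NatTrans.comp_app, ← NatTrans.comp_app, Φ.ρo_ι,
      Ψ.ρo_ι]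
  induction k using Ordinal.limitRecOn with
  | zero => exact TG.hom_ext_zero A (hι 0)
  | add_one k ih =>
    refine TG.hom_ext_succ k A ?_ (hι (k + 1))
    rw [q_comp_ρo_succ_comp Φ hassoc, q_comp_ρo_succ_comp Ψ hassoc, ih, h]
  | limit k hk ih =>
    refine TG.hom_ext_limit hk A fun j hj => ?_
    rw [← Category.assoc, ← Category.assoc, ← NatTrans.comp_app, ← NatTrans.comp_app,
      Φ.ρo_limit k hk j hj, Ψ.ρo_limit k hk j hj, ih j hj]

lemma app_comp_eq_of_ρo_comp_eq (hl : Order.IsSuccLimit l) {φ ψ : G ⟶ TF.Fo l}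
    (Φ : ChainExtension F G TF TG l μ φ) (Ψ : ChainExtension F G TF TG l μ ψ) {A X : C}
    {β : (TF.Fo l).obj A ⟶ X} (h : (Φ.ρo l).app A ≫ β = (Ψ.ρo l).app A ≫ β) :
    φ.app A ≫ β = ψ.app A ≫ β := by
  have h1 : 0 + 1 < l := hl.add_one_lt hl.pos
  rw [← Φ.ρo_one, ← Ψ.ρo_one, ← Φ.ρo_limit l hl _ h1, ← Ψ.ρo_limit l hl _ h1]
  simp only [NatTrans.comp_app, Category.assoc, h]

end ChainExtension

theorem variety_iso_diagram_algebras_general {C : Type u} [Category.{v} C]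
    (F G : C ⥤ C) (TF : TermConstruction F) (TG : TermConstruction G)
    (l : Ordinal.{v}) (hl : Order.IsSuccLimit l)
    [PreservesColimitsOfShape {m : Ordinal.{v} // m < l} F]
    (Ev : ∀ (A : C) (α : F.obj A ⟶ A), TermEval F TF A α)
    (υ : TF.Fo l ⋙ F ⟶ TF.Fo l)
    (hυ : ∀ (n : Ordinal.{v}) (hn : n < l) (hn1 : n + 1 ≤ l) (A : C),
      F.map ((TF.w hn.le).app A) ≫ υ.app A = (TF.q n).app A ≫ (TF.w hn1).app A)
    (μ : TF.Fo l ⋙ TF.Fo l ⟶ TF.Fo l)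
    (hμ : ∀ A : C, μ.app A = (Ev ((TF.Fo l).obj A) (υ.app A)).ε l)
    (φ ψ : G ⟶ TF.Fo l)
    (Φ : ChainExtension F G TF TG l μ φ) (Ψ : ChainExtension F G TF TG l μ ψ) :
    ∃ (I : ObjectProperty.FullSubcategory (fun X : Endofunctor.Algebra F =>
            φ.app X.a ≫ (Ev X.a X.str).ε l = ψ.app X.a ≫ (Ev X.a X.str).ε l) ⥤
          ObjectProperty.FullSubcategory (fun Y : Endofunctor.Algebra (TF.Fo l) =>
            (TF.ι l).app Y.a ≫ Y.str = 𝟙 Y.a ∧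
            μ.app Y.a ≫ Y.str = (TF.Fo l).map Y.str ≫ Y.str ∧
            (Φ.ρo l).app Y.a ≫ Y.str = (Ψ.ρo l).app Y.a ≫ Y.str))
      (J : ObjectProperty.FullSubcategory (fun Y : Endofunctor.Algebra (TF.Fo l) =>
            (TF.ι l).app Y.a ≫ Y.str = 𝟙 Y.a ∧
            μ.app Y.a ≫ Y.str = (TF.Fo l).map Y.str ≫ Y.str ∧
            (Φ.ρo l).app Y.a ≫ Y.str = (Ψ.ρo l).app Y.a ≫ Y.str) ⥤
          ObjectProperty.FullSubcategory (fun X : Endofunctor.Algebra F =>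
            φ.app X.a ≫ (Ev X.a X.str).ε l = ψ.app X.a ≫ (Ev X.a X.str).ε l)),
      I ⋙ J = 𝟭 _ ∧ J ⋙ I = 𝟭 _ ∧
      I ⋙ ObjectProperty.ι _ ⋙ Endofunctor.Algebra.forget (TF.Fo l) =
        ObjectProperty.ι _ ⋙ Endofunctor.Algebra.forget F ∧
      J ⋙ ObjectProperty.ι _ ⋙ Endofunctor.Algebra.forget F =
        ObjectProperty.ι _ ⋙ Endofunctor.Algebra.forget (TF.Fo l) := by
  refine ⟨ObjectProperty.lift _ (ObjectProperty.ι _ ⋙ Endofunctor.Algebra.restructure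
      (fun {A} α => (Ev A α).ε l)
      fun f hf => (TermEval.ε_naturality (Ev _ _) (Ev _ _) f hf l).symm) fun X => ?_,
    ObjectProperty.lift _ (ObjectProperty.ι _ ⋙ Endofunctor.Algebra.restructure
      (fun {A} β => F.map ((TF.ι l).app A) ≫ υ.app A ≫ β)
      fun f hf => ?_) fun Y => ?_,
    ?_, ?_, rfl, rfl⟩
  · have hassoc := hμ X.obj.a ▸ TermEval.ε_comp_ε hl hυ (Ev _ _) (Ev X.obj.a X.obj.str)
    exact ⟨TermEval.ι_comp_ε hl _, hassoc,
      ChainExtension.ρo_comp_eq_of_app_comp_eq Φ Ψ hassoc X.property l⟩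
  · simp only [Category.assoc, ← hf, ← υ.naturality_assoc, Functor.comp_map, ← F.map_comp_assoc,
      ← (TF.ι l).naturality]
    rfl
  · have hε := TermEval.ε_eq_of_unit_of_assoc hl hυ (Ev _ _) Y.property.1
      (hμ Y.obj.a ▸ Y.property.2.1) (Ev _ _)
    exact hε ▸ ChainExtension.app_comp_eq_of_ρo_comp_eq hl Φ Ψ Y.property.2.2
  · exact Functor.ext_of_comp_faithful (ObjectProperty.ι _ ⋙ Endofunctor.Algebra.forget F)
      (fun X => ObjectProperty.FullSubcategory.ext
        (congrArg (Endofunctor.Algebra.mk _) (TermEval.map_ι_comp_υ_comp_ε hl hυ _))) rfl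
  · exact Functor.ext_of_comp_faithful (ObjectProperty.ι _ ⋙ Endofunctor.Algebra.forget _)
      (fun Y => ObjectProperty.FullSubcategory.ext (congrArg (Endofunctor.Algebra.mk _)
        (TermEval.ε_eq_of_unit_of_assoc hl hυ (Ev _ _) Y.property.1
          (hμ Y.obj.a ▸ Y.property.2.1) (Ev _ _)))) rfl

/-- Concrete isomorphism between the variety `Alg(F, (φ, ψ))` and the category of algebras for
the diagram `D` of monads given by the two monad morphisms `φ_λ, ψ_λ : M(G) ⟶ M(F)` (the
unique monad morphisms extending `φ` and `ψ`, obtained by the chain construction):  the full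
subcategory of `F`-algebras satisfying the `λ`-ary identity `(φ, ψ)` is isomorphic, over `C`,
to the full subcategory of `F_λ`-algebras which are Eilenberg–Moore algebras for the free
monad `M(F)` and are compatible with the diagram, i.e. `β ∘ (φ_λ)_A = β ∘ (ψ_λ)_A`. -/
theorem variety_iso_diagram_algebras {C : Type u} [Category.{v} C] [HasColimits C]
    (F G : C ⥤ C) (TF : TermConstruction F) (TG : TermConstruction G)
    (l : Ordinal.{v}) (hl : Order.IsSuccLimit l)
    [PreservesColimitsOfShape {m : Ordinal.{v} // m < l} F]
    [PreservesColimitsOfShape {m : Ordinal.{v} // m < l} G]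
    (Ev : ∀ (A : C) (α : F.obj A ⟶ A), TermEval F TF A α)
    (υ : TF.Fo l ⋙ F ⟶ TF.Fo l)
    (hυ : ∀ (n : Ordinal.{v}) (hn : n < l) (hn1 : n + 1 ≤ l) (A : C),
      F.map ((TF.w hn.le).app A) ≫ υ.app A = (TF.q n).app A ≫ (TF.w hn1).app A)
    (μ : TF.Fo l ⋙ TF.Fo l ⟶ TF.Fo l)
    (hμ : ∀ A : C, μ.app A = (Ev ((TF.Fo l).obj A) (υ.app A)).ε l)
    (φ ψ : G ⟶ TF.Fo l)
    (Φ : ChainExtension F G TF TG l μ φ) (Ψ : ChainExtension F G TF TG l μ ψ) :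
    ∃ (I : ObjectProperty.FullSubcategory (fun X : Endofunctor.Algebra F =>
            φ.app X.a ≫ (Ev X.a X.str).ε l = ψ.app X.a ≫ (Ev X.a X.str).ε l) ⥤
          ObjectProperty.FullSubcategory (fun Y : Endofunctor.Algebra (TF.Fo l) =>
            (TF.ι l).app Y.a ≫ Y.str = 𝟙 Y.a ∧
            μ.app Y.a ≫ Y.str = (TF.Fo l).map Y.str ≫ Y.str ∧
            (Φ.ρo l).app Y.a ≫ Y.str = (Ψ.ρo l).app Y.a ≫ Y.str))
      (J : ObjectProperty.FullSubcategory (fun Y : Endofunctor.Algebra (TF.Fo l) =>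
            (TF.ι l).app Y.a ≫ Y.str = 𝟙 Y.a ∧
            μ.app Y.a ≫ Y.str = (TF.Fo l).map Y.str ≫ Y.str ∧
            (Φ.ρo l).app Y.a ≫ Y.str = (Ψ.ρo l).app Y.a ≫ Y.str) ⥤
          ObjectProperty.FullSubcategory (fun X : Endofunctor.Algebra F =>
            φ.app X.a ≫ (Ev X.a X.str).ε l = ψ.app X.a ≫ (Ev X.a X.str).ε l)),
      I ⋙ J = 𝟭 _ ∧ J ⋙ I = 𝟭 _ ∧
      I ⋙ ObjectProperty.ι _ ⋙ Endofunctor.Algebra.forget (TF.Fo l) =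
        ObjectProperty.ι _ ⋙ Endofunctor.Algebra.forget F ∧
      J ⋙ ObjectProperty.ι _ ⋙ Endofunctor.Algebra.forget F =
        ObjectProperty.ι _ ⋙ Endofunctor.Algebra.forget (TF.Fo l) :=
  variety_iso_diagram_algebras_general F G TF TG l hl Ev υ hυ μ hμ φ ψ Φ Ψ
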